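/- There exists a countable integral ultrametric space CU such that every separable metric space of asymptotic dimension 0 admits a coarse embedding into CU. -/

import Mathlib

/-- `d` is a metric on the set `X`. -/
def IsMetricD {X : Type*} (d : X → X → ℝ) : Prop :=
  (∀ x, d x x = 0) ∧ (∀ x y, d x y = 0 → x = y) ∧ (∀ x y, d x y = d y x) ∧
    (∀ x y z, d x z ≤ d x y + d y z)

/-- the ultrametric (strong triangle) inequality. -/
def IsUltraD {X : Type*} (d : X → X → ℝ) : Prop :=
  ∀ x y z, d x z ≤ max (d x y) (d y z)

/-- There is an `r`-chain joining `a` and `b`. -/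
def ChainD {Y : Type*} (d : Y → Y → ℝ) (r : ℝ) (a b : Y) : Prop :=
  ∃ (k : ℕ) (c : ℕ → Y), c 0 = a ∧ c k = b ∧ ∀ i < k, d (c i) (c (i + 1)) < r

/-- asymptotic dimension 0: chains of uniformly bounded gauge are uniformly bounded. -/
def AsDimZeroD {Y : Type*} (d : Y → Y → ℝ) : Prop :=
  ∀ r > (0 : ℝ), ∃ s > (0 : ℝ), ∀ a b : Y, ChainD d r a b → d a b ≤ s

/-- large scale continuous (uniformly bornologous). -/
def LSCD {X Y : Type*} (dX : X → X → ℝ) (dY : Y → Y → ℝ) (f : X → Y) : Prop :=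
  ∀ R > (0 : ℝ), ∃ s > (0 : ℝ), ∀ x y : X, dX x y ≤ R → dY (f x) (f y) ≤ s

/-- uniformly proper. -/
def UnifProperD {X Y : Type*} (dX : X → X → ℝ) (dY : Y → Y → ℝ) (f : X → Y) : Prop :=
  ∀ R > (0 : ℝ), ∃ s > (0 : ℝ), ∀ x y : X, dY (f x) (f y) ≤ R → dX x y ≤ s

/-- coarsely surjective. -/
def CoarselySurjD {X Y : Type*} (dY : Y → Y → ℝ) (f : X → Y) : Prop :=
  ∃ R > (0 : ℝ), ∀ y : Y, ∃ x : X, dY (f x) y ≤ R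

/-- coarse embedding. -/
def CoarseEmbD {X Y : Type*} (dX : X → X → ℝ) (dY : Y → Y → ℝ) (f : X → Y) : Prop :=
  LSCD dX dY f ∧ UnifProperD dX dY f

/-- coarse equivalence. -/
def CoarseEquivD {X Y : Type*} (dX : X → X → ℝ) (dY : Y → Y → ℝ) (f : X → Y) : Prop :=
  LSCD dX dY f ∧ UnifProperD dX dY f ∧ CoarselySurjD dY f

/-- the induced integral ultrametric `d_f^ul`. -/
noncomputable def dulD {X Y : Type*} (d : Y → Y → ℝ) (f : X → Y) (x y : X) : ℝ :=
  letI := Classical.decEq X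
  if x = y then 0 else
    ((sInf {r : ℕ | 1 ≤ r ∧ ChainD d (r : ℝ) (f x) (f y)} : ℕ) : ℝ)

/-- `d` is a metric on the subset `A`. -/
def IsMetricOnD {X : Type*} (d : X → X → ℝ) (A : Set X) : Prop :=
  (∀ x ∈ A, d x x = 0) ∧ (∀ x ∈ A, ∀ y ∈ A, d x y = 0 → x = y) ∧
    (∀ x ∈ A, ∀ y ∈ A, d x y = d y x) ∧
    (∀ x ∈ A, ∀ y ∈ A, ∀ z ∈ A, d x z ≤ d x y + d y z)

/-- the ultrametric inequality on a subset. -/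
def IsUltraOnD {X : Type*} (d : X → X → ℝ) (A : Set X) : Prop :=
  ∀ x ∈ A, ∀ y ∈ A, ∀ z ∈ A, d x z ≤ max (d x y) (d y z)

/-- every triangle is isosceles. -/
def IsoscelesD {X : Type*} (d : X → X → ℝ) : Prop :=
  ∀ x y z : X, d x y = d y z ∨ d x y = d x z ∨ d y z = d x z

/-- every triangle with vertices in `A` is isosceles. -/
def IsoscelesOnD {X : Type*} (d : X → X → ℝ) (A : Set X) : Prop :=
  ∀ x ∈ A, ∀ y ∈ A, ∀ z ∈ A, d x y = d y z ∨ d x y = d x z ∨ d y z = d x z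

/-- a set is bounded with respect to the distance function `d`. -/
def BoundedD {X : Type*} (d : X → X → ℝ) (A : Set X) : Prop :=
  ∃ C : ℝ, ∀ x ∈ A, ∀ y ∈ A, d x y ≤ C

/-- `d` makes the disjoint union `Σ s, X s` a coarse disjoint union of the family
of metrics `ds`. -/
def IsCoarseDisjointUnion {S : Type*} {X : S → Type*} (ds : ∀ s, X s → X s → ℝ)
    (d : (Σ s, X s) → (Σ s, X s) → ℝ) : Prop :=
  (∀ (s : S) (x y : X s), d ⟨s, x⟩ ⟨s, y⟩ = ds s x y) ∧
    ∀ M > (0 : ℝ), ∃ B : ∀ s, Set (X s),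
      (∀ s, BoundedD (ds s) (B s)) ∧ {s | (B s).Nonempty}.Finite ∧
      ∀ (s t : S) (x : X s) (y : X t), s ≠ t → x ∉ B s → y ∉ B t → d ⟨s, x⟩ ⟨t, y⟩ > M

/-!
In a space of asymptotic dimension 0 the chain distance `dulD dist id` (the least integer `r ≥ 1`
such that `x` and `y` are joined by an `r`-chain) is an integral ultrametric that is coarsely
equivalent to the metric. Closed balls of a fixed radius in an ultrametric space partition it, so
a point `x` is encoded by the sequence whose `n`-th term is the first index `j` of a dense sequence
with `u j` in the ball of radius `n + 1` around `x`. Two codes agree from `n` on exactly when the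
points are at chain distance at most `n + 1`, and finitely supported sequences `ℕ →₀ ℕ`, at
distance one plus the last index where they differ, form the countable integral ultrametric space.
-/

section Chains

variable {Y : Type*} {d : Y → Y → ℝ} {r r' : ℝ} {a b c : Y}

theorem chainD_refl : ChainD d r a a :=
  ⟨0, fun _ => a, rfl, rfl, fun _ h => absurd h (Nat.not_lt_zero _)⟩

theorem chainD_of_lt (h : d a b < r) : ChainD d r a b :=
  ⟨1, fun i => if i = 0 then a else b, rfl, rfl, fun i hi => by
    obtain rfl : i = 0 := by omega
    simpa using h⟩

theorem ChainD.mono (hc : ChainD d r a b) (h : r ≤ r') : ChainD d r' a b := by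
  obtain ⟨k, c, h0, hk, hs⟩ := hc
  exact ⟨k, c, h0, hk, fun i hi => (hs i hi).trans_le h⟩

theorem ChainD.symm (hd : ∀ x y, d x y = d y x) (hc : ChainD d r a b) : ChainD d r b a := by
  obtain ⟨k, c, h0, hk, hs⟩ := hc
  refine ⟨k, fun i => c (k - i), by simp [hk], by simp [h0], fun i hi => ?_⟩
  change d (c (k - i)) (c (k - (i + 1))) < r
  rw [show k - i = k - (i + 1) + 1 by omega, hd]
  exact hs _ (by omega)

theorem ChainD.trans (h₁ : ChainD d r a b) (h₂ : ChainD d r b c) : ChainD d r a c := by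
  obtain ⟨k, x, hx0, hxk, hx⟩ := h₁
  obtain ⟨l, y, hy0, hyl, hy⟩ := h₂
  refine ⟨k + l, fun i => if i ≤ k then x i else y (i - k), by simp [hx0], ?_, fun i hi => ?_⟩
  · rcases l.eq_zero_or_pos with rfl | hl
    · simp [hxk, ← hyl, hy0]
    · simp [show ¬ k + l ≤ k by omega, hyl]
  · rcases lt_or_ge i k with hik | hki
    · simpa [hik.le, show i + 1 ≤ k by omega] using hx i hik
    · rcases hki.eq_or_lt with rfl | hki
      · simpa [hxk, ← hy0] using hy 0 (by omega)
      · simpa [show ¬ i ≤ k by omega, show ¬ i + 1 ≤ k by omega,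
          show i + 1 - k = i - k + 1 by omega] using hy (i - k) (by omega)

end Chains

section ChainUltrametric

variable {X Y : Type*} {d : Y → Y → ℝ} {f : X → Y} {x y : X}

theorem exists_dulD_eq_chainD (h : x ≠ y) :
    ∃ n : ℕ, 1 ≤ n ∧ ChainD d n (f x) (f y) ∧ dulD d f x y = n := by
  have hne : {r : ℕ | 1 ≤ r ∧ ChainD d r (f x) (f y)}.Nonempty :=
    ⟨⌈d (f x) (f y)⌉₊ + 1, by omega,
      chainD_of_lt (by push_cast; linarith [Nat.le_ceil (d (f x) (f y))])⟩
  exact ⟨_, (Nat.sInf_mem hne).1, (Nat.sInf_mem hne).2, by simp [dulD, h]⟩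

theorem dulD_le {n : ℕ} (hn : 1 ≤ n) (hc : ChainD d n (f x) (f y)) : dulD d f x y ≤ n := by
  rcases eq_or_ne x y with rfl | h
  · simp [dulD]
  · simp only [dulD, h, if_false]
    exact_mod_cast Nat.sInf_le
      (show n ∈ {r : ℕ | 1 ≤ r ∧ ChainD d r (f x) (f y)} from ⟨hn, hc⟩)

theorem chainD_of_dulD_le {r : ℝ} (h : dulD d f x y ≤ r) : ChainD d r (f x) (f y) := by
  rcases eq_or_ne x y with rfl | hxy
  · exact chainD_refl
  · obtain ⟨n, -, hc, hn⟩ := exists_dulD_eq_chainD (d := d) (f := f) hxy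
    exact hc.mono (hn ▸ h)

theorem dulD_comm (hd : ∀ a b, d a b = d b a) (x y : X) : dulD d f x y = dulD d f y x := by
  rcases eq_or_ne x y with rfl | h
  · rfl
  · simp only [dulD, h, h.symm, if_false]
    congr 3
    ext r
    exact and_congr_right' ⟨ChainD.symm hd, ChainD.symm hd⟩

theorem isUltraD_dulD : IsUltraD (dulD d f) := by
  intro x y z
  rcases eq_or_ne x y with rfl | hxy
  · exact le_max_right _ _
  rcases eq_or_ne y z with rfl | hyz
  · exact le_max_left _ _
  obtain ⟨m, hm, hcm, hxy⟩ := exists_dulD_eq_chainD (d := d) (f := f) hxy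
  obtain ⟨n, -, hcn, hyz⟩ := exists_dulD_eq_chainD (d := d) (f := f) hyz
  rw [hxy, hyz, ← Nat.cast_max]
  exact dulD_le (hm.trans (le_max_left m n))
    ((hcm.mono (by simp)).trans (hcn.mono (by simp)))

theorem coarseEmbD_id_dulD (hd : AsDimZeroD d) : CoarseEmbD d (dulD d id) id := by
  refine ⟨fun R _ => ⟨⌈R⌉₊ + 1, by positivity, fun x y h => ?_⟩, fun R hR => ?_⟩
  · exact_mod_cast dulD_le (by omega)
      (chainD_of_lt (by simp only [id]; push_cast; linarith [Nat.le_ceil R]))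
  · obtain ⟨s, hs, hbound⟩ := hd R hR
    exact ⟨s, hs, fun x y h => hbound x y (chainD_of_dulD_le h)⟩

end ChainUltrametric

theorem IsUltraD.le_add {X : Type*} {d : X → X → ℝ} (h : IsUltraD d)
    (hd : ∀ x y, 0 ≤ d x y) (x y z : X) : d x z ≤ d x y + d y z :=
  (h x y z).trans (max_le_add_of_nonneg (hd x y) (hd y z))

theorem CoarseEmbD.comp {X Y W : Type*} {dX : X → X → ℝ} {dY : Y → Y → ℝ} {dW : W → W → ℝ}
    {g : Y → W} {f : X → Y} (hg : CoarseEmbD dY dW g) (hf : CoarseEmbD dX dY f) :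
    CoarseEmbD dX dW (g ∘ f) := by
  refine ⟨fun R hR => ?_, fun R hR => ?_⟩
  · obtain ⟨s, hs, hfs⟩ := hf.1 R hR
    obtain ⟨t, ht, hgt⟩ := hg.1 s hs
    exact ⟨t, ht, fun x y h => hgt _ _ (hfs x y h)⟩
  · obtain ⟨s, hs, hgs⟩ := hg.2 R hR
    obtain ⟨t, ht, hft⟩ := hf.2 s hs
    exact ⟨t, ht, fun x y h => hft x y (hgs _ _ h)⟩

section TailDist

def tailDist (f g : ℕ →₀ ℕ) : ℕ :=
  (f.neLocus g).sup (· + 1)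

variable {f g h : ℕ →₀ ℕ} {n : ℕ}

theorem tailDist_le_iff : tailDist f g ≤ n ↔ ∀ m, f m ≠ g m → m < n := by
  simp [tailDist, Finset.sup_le_iff, Finsupp.mem_neLocus]

theorem lt_tailDist (hm : f n ≠ g n) : n < tailDist f g :=
  tailDist_le_iff.1 le_rfl n hm

theorem tailDist_eq_zero : tailDist f g = 0 ↔ f = g := by
  rw [← Nat.le_zero, tailDist_le_iff, Finsupp.ext_iff]
  exact forall_congr' fun m => by simp

theorem tailDist_comm (f g : ℕ →₀ ℕ) : tailDist f g = tailDist g f := by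
  rw [tailDist, Finsupp.neLocus_comm, tailDist]

theorem tailDist_le_max (f g h : ℕ →₀ ℕ) : tailDist f h ≤ max (tailDist f g) (tailDist g h) :=
  tailDist_le_iff.2 fun m hm => by
    by_cases hfg : f m = g m
    · exact lt_max_of_lt_right (lt_tailDist (hfg ▸ hm))
    · exact lt_max_of_lt_left (lt_tailDist hfg)

theorem isUltraD_tailDist : IsUltraD fun f g : ℕ →₀ ℕ => (tailDist f g : ℝ) := fun f g h =>
  (Nat.cast_le.2 (tailDist_le_max f g h)).trans_eq (Nat.cast_max _ _)

theorem isMetricD_tailDist : IsMetricD fun f g : ℕ →₀ ℕ => (tailDist f g : ℝ) :=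
  ⟨fun f => by simp [tailDist_eq_zero], fun f g h => tailDist_eq_zero.1 (Nat.cast_eq_zero.1 h),
    fun f g => congrArg Nat.cast (tailDist_comm f g),
    isUltraD_tailDist.le_add fun _ _ => Nat.cast_nonneg _⟩

end TailDist

section BallCode

variable {Z : Type*} (δ : Z → Z → ℝ) (u : ℕ → Z)

noncomputable def ballIndex (x : Z) (n : ℕ) : ℕ :=
  sInf {j | δ (u j) x ≤ n + 1}

noncomputable def ballCode (x : Z) : ℕ →₀ ℕ :=
  Finsupp.onFinset (Finset.range ⌈δ (u 0) x⌉₊) (ballIndex δ u x) fun n hn => by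
    contrapose! hn
    refine Nat.sInf_eq_zero.2 (Or.inl ?_)
    have := Nat.ceil_le.1 (not_lt.1 (Finset.mem_range.not.1 hn))
    change δ (u 0) x ≤ n + 1
    linarith

variable {δ u}

theorem ballIndex_eq_iff (hcomm : ∀ x y, δ x y = δ y x) (hultra : IsUltraD δ)
    (hu : ∀ x, ∃ j, δ (u j) x ≤ 1) {x y : Z} {n : ℕ} :
    ballIndex δ u x n = ballIndex δ u y n ↔ δ x y ≤ n + 1 := by
  have hmem : ∀ z, δ (u (ballIndex δ u z n)) z ≤ n + 1 := fun z => by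
    obtain ⟨j, hj⟩ := hu z
    exact Nat.sInf_mem (s := {j | δ (u j) z ≤ n + 1})
      ⟨j, show δ (u j) z ≤ n + 1 by linarith [n.cast_nonneg (α := ℝ)]⟩
  constructor
  · intro h
    have hy := hmem y
    rw [← h] at hy
    exact (hultra _ _ _).trans (max_le (hcomm x _ ▸ hmem x) hy)
  · intro h
    unfold ballIndex
    congr 1
    ext j
    exact ⟨fun hj => (hultra _ x _).trans (max_le hj h),
      fun hj => (hultra _ y _).trans (max_le hj (hcomm x y ▸ h))⟩

theorem tailDist_ballCode_le_iff (hcomm : ∀ x y, δ x y = δ y x) (hultra : IsUltraD δ)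
    (hu : ∀ x, ∃ j, δ (u j) x ≤ 1) {x y : Z} {n : ℕ} :
    tailDist (ballCode δ u x) (ballCode δ u y) ≤ n ↔ δ x y ≤ n + 1 := by
  simp only [tailDist_le_iff, ballCode, Finsupp.onFinset_apply, Ne,
    ballIndex_eq_iff hcomm hultra hu]
  constructor
  · intro h
    by_contra hn
    exact (h n hn).false
  · intro h m hm
    by_contra! hnm
    exact hm (h.trans (by exact_mod_cast Nat.add_le_add_right hnm 1))

theorem coarseEmbD_ballCode (hcomm : ∀ x y, δ x y = δ y x) (hultra : IsUltraD δ)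
    (hu : ∀ x, ∃ j, δ (u j) x ≤ 1) :
    CoarseEmbD δ (fun f g => (tailDist f g : ℝ)) (ballCode δ u) := by
  refine ⟨fun R _ => ⟨⌈R⌉₊ + 1, by positivity, fun x y h => ?_⟩,
    fun R hR => ⟨R + 1, by linarith, fun x y h => ?_⟩⟩
  · have := (tailDist_ballCode_le_iff hcomm hultra hu (n := ⌈R⌉₊)).2
      (h.trans (by linarith [Nat.le_ceil R]))
    change (tailDist _ _ : ℝ) ≤ ⌈R⌉₊ + 1
    exact_mod_cast this.trans (Nat.le_succ _)
  · have := (tailDist_ballCode_le_iff hcomm hultra hu (n := ⌊R⌋₊)).1 (Nat.le_floor h)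
    linarith [Nat.floor_le hR.le]

end BallCode

/-- There is a countable integral ultrametric space `CU` into which every
separable metric space of asymptotic dimension 0 coarsely embeds. -/
theorem universal_space_separable_asdim_zero :
    ∃ (CU : Type) (dC : CU → CU → ℝ), Countable CU ∧ IsMetricD dC ∧ IsUltraD dC ∧
      (∀ a b : CU, ∃ n : ℕ, dC a b = (n : ℝ)) ∧
      ∀ (Z : Type u) [MetricSpace Z] [TopologicalSpace.SeparableSpace Z],
        AsDimZeroD (dist : Z → Z → ℝ) →
        ∃ e : Z → CU, CoarseEmbD (dist : Z → Z → ℝ) dC e := by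
  refine ⟨ℕ →₀ ℕ, fun f g => tailDist f g, inferInstance, isMetricD_tailDist, isUltraD_tailDist,
    fun f g => ⟨_, rfl⟩, fun Z _ _ hZ => ?_⟩
  rcases isEmpty_or_nonempty Z with _ | _
  · exact ⟨isEmptyElim, fun _ _ => ⟨1, one_pos, isEmptyElim⟩, fun _ _ => ⟨1, one_pos, isEmptyElim⟩⟩
  obtain ⟨u, hu⟩ := TopologicalSpace.exists_dense_seq Z
  have hnet : ∀ x, ∃ j, dulD dist id (u j) x ≤ 1 := fun x => by
    obtain ⟨j, hj⟩ := hu.exists_dist_lt x one_pos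
    exact ⟨j, by simpa using dulD_le (n := 1) le_rfl (chainD_of_lt (by simpa [dist_comm] using hj))⟩
  exact ⟨_, (coarseEmbD_ballCode (dulD_comm dist_comm) isUltraD_dulD hnet).comp
    (coarseEmbD_id_dulD hZ)⟩
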